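/- Let E be a real inner product space (the parameter space), T > 0, and q ∈ ℝ^C a vector with nonnegative entries summing to 1. Let f : E → ℝ^C be differentiable at w ∈ E, and for each k let ψ_k ∈ E be the gradient (Riesz representative of the Fréchet derivative) of the k-th coordinate f_k at w. Define the loss L(w') = −Σ_{i=1}^C q_i · log p_i(f(w')), the cross-entropy of the temperature-T softmax of the logits against q. If the per-logit gradients ψ_1, …, ψ_C are pairwise orthogonal and all have the same norm c ≥ 0, then L is differentiable at w and the norm of its gradient satisfies ‖∇L(w)‖ = (c/T) · ‖p(f(w)) − q‖₂, where ‖·‖₂ is the Euclidean norm on ℝ^C. -/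

import Mathlib

/-!
Since `∑ i, q i = 1`, the loss in the logits `z` is `log (∑ j, exp (z j / T)) - ∑ i, q i * z i / T`,
whose gradient is `(p - q) / T` with `p` the softmax of `z`. By the chain rule
`∇L(w) = ∑ k, ((p k - q k) / T) • ψ k`, and Pythagoras for the orthogonal `ψ k` of common
norm `c` gives `‖∇L(w)‖ = c * √(∑ k, ((p k - q k) / T) ^ 2)`.
-/

/-- The temperature-`T` softmax of a logit vector `f : Fin C → ℝ`. -/
noncomputable def softmax {C : ℕ} (T : ℝ) (f : Fin C → ℝ) (i : Fin C) : ℝ :=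
  Real.exp (f i / T) / ∑ j, Real.exp (f j / T)

open Real InnerProductSpace ContinuousLinearMap

theorem norm_sum_sq_eq_sum_norm_sq_of_pairwise_inner_eq_zero
    {E ι : Type*} [NormedAddCommGroup E] [InnerProductSpace ℝ E] [Fintype ι] {v : ι → E}
    (hv : Pairwise fun i j => ⟪v i, v j⟫_ℝ = 0) :
    ‖∑ i, v i‖ ^ 2 = ∑ i, ‖v i‖ ^ 2 := by
  rw [← real_inner_self_eq_norm_sq, sum_inner]
  refine Finset.sum_congr rfl fun i _ => ?_
  rw [inner_sum, Finset.sum_eq_single i (fun j _ hji => hv hji.symm) (by simp),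
    real_inner_self_eq_norm_sq]

theorem norm_sum_smul_of_pairwise_inner_eq_zero_of_norm_eq
    {E ι : Type*} [NormedAddCommGroup E] [InnerProductSpace ℝ E] [Fintype ι] {ψ : ι → E} {c : ℝ}
    (hψ : Pairwise fun i j => ⟪ψ i, ψ j⟫_ℝ = 0) (hnorm : ∀ k, ‖ψ k‖ = c) (hc : 0 ≤ c)
    (a : ι → ℝ) :
    ‖∑ k, a k • ψ k‖ = c * √(∑ k, a k ^ 2) := by
  have hsmul : Pairwise fun i j => ⟪a i • ψ i, a j • ψ j⟫_ℝ = 0 := fun i j hij => by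
    simp only [real_inner_smul_left, real_inner_smul_right, hψ hij, mul_zero]
  rw [← sqrt_sq (norm_nonneg _), norm_sum_sq_eq_sum_norm_sq_of_pairwise_inner_eq_zero hsmul,
    ← sqrt_sq hc, ← sqrt_mul (sq_nonneg c), Finset.mul_sum]
  congr 1
  refine Finset.sum_congr rfl fun k _ => ?_
  rw [norm_smul, hnorm, Real.norm_eq_abs, mul_pow, sq_abs, mul_comm]

theorem HasFDerivAt.hasGradientAt_comp_of_hasGradientAt_apply
    {E ι : Type*} [NormedAddCommGroup E] [InnerProductSpace ℝ E] [CompleteSpace E] [Fintype ι]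
    {ℓ : (ι → ℝ) → ℝ} {f : E → ι → ℝ} {a : ι → ℝ} {ψ : ι → E} {w : E}
    (hℓ : HasFDerivAt ℓ (∑ k, a k • (proj k : (ι → ℝ) →L[ℝ] ℝ)) (f w))
    (hf : ∀ k, HasGradientAt (fun w' => f w' k) (ψ k) w) :
    HasGradientAt (fun w' => ℓ (f w')) (∑ k, a k • ψ k) w := by
  have hf' : HasFDerivAt f (ContinuousLinearMap.pi fun k => toDual ℝ E (ψ k)) w :=
    hasFDerivAt_pi.2 fun k => (hf k).hasFDerivAt
  rw [hasGradientAt_iff_hasFDerivAt]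
  refine (hℓ.comp w hf').congr_fderiv ?_
  ext v
  simp only [comp_apply, coe_pi', toDual_apply_apply, sum_apply, smul_apply, proj_apply,
    smul_eq_mul, map_sum, map_smul]

section Softmax

variable {C : ℕ} (T : ℝ)

theorem sum_exp_div_pos (z : Fin C → ℝ) (i : Fin C) : 0 < ∑ j, exp (z j / T) :=
  Finset.sum_pos (fun _ _ => exp_pos _) ⟨i, Finset.mem_univ i⟩

theorem log_softmax (z : Fin C → ℝ) (i : Fin C) :
    log (softmax T z i) = z i / T - log (∑ j, exp (z j / T)) := by
  rw [softmax, log_div (exp_ne_zero _) (sum_exp_div_pos T z i).ne', log_exp]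

theorem neg_sum_mul_log_softmax {q : Fin C → ℝ} (hq : ∑ i, q i = 1) (z : Fin C → ℝ) :
    -∑ i, q i * log (softmax T z i) = log (∑ j, exp (z j / T)) - ∑ i, q i * (z i / T) := by
  simp only [log_softmax, mul_sub, Finset.sum_sub_distrib, ← Finset.sum_mul, hq, one_mul]
  ring

theorem hasFDerivAt_log_sum_exp [NeZero C] (z : Fin C → ℝ) :
    HasFDerivAt (fun z : Fin C → ℝ => log (∑ j, exp (z j / T)))
      (∑ k, (softmax T z k / T) • (proj k : (Fin C → ℝ) →L[ℝ] ℝ)) z := by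
  have hdiv : ∀ k, HasFDerivAt (fun z : Fin C → ℝ => z k / T)
      (T⁻¹ • proj (R := ℝ) k) z := fun k => by
    simpa [div_eq_inv_mul] using (hasFDerivAt_apply k z).const_mul T⁻¹
  have hsum := HasFDerivAt.fun_sum (u := Finset.univ) fun k _ => (hdiv k).exp
  refine (hsum.log (sum_exp_div_pos T z 0).ne').congr_fderiv ?_
  simp only [Finset.smul_sum, smul_smul, softmax]
  refine Finset.sum_congr rfl fun k _ => ?_
  congr 1
  field_simp

theorem hasFDerivAt_neg_sum_mul_log_softmax {q : Fin C → ℝ} (hq : ∑ i, q i = 1)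
    (z : Fin C → ℝ) :
    HasFDerivAt (fun z => -∑ i, q i * log (softmax T z i))
      (∑ k, ((softmax T z k - q k) / T) • (proj k : (Fin C → ℝ) →L[ℝ] ℝ)) z := by
  have : NeZero C := ⟨by rintro rfl; simp at hq⟩
  have hlin : HasFDerivAt (fun z : Fin C → ℝ => ∑ i, q i * (z i / T))
      (∑ k, (q k / T) • (proj k : (Fin C → ℝ) →L[ℝ] ℝ)) z := by
    refine HasFDerivAt.fun_sum fun k _ => ?_
    have := (hasFDerivAt_apply (𝕜 := ℝ) k z).const_mul (q k / T)
    simp only [div_mul_eq_mul_div, ← mul_div_assoc] at this ⊢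
    exact this
  have hloss := (hasFDerivAt_log_sum_exp T z).fun_sub hlin
  simp_rw [← Finset.sum_sub_distrib, ← sub_smul, ← sub_div] at hloss
  rw [funext (neg_sum_mul_log_softmax T hq)]
  exact hloss

end Softmax

theorem gradient_norm_crossEntropy_softmax_general
    {E : Type*} [NormedAddCommGroup E] [InnerProductSpace ℝ E] [CompleteSpace E]
    {C : ℕ} (T : ℝ) (hT : 0 < T)
    (q : Fin C → ℝ) (hq1 : ∑ i, q i = 1)
    (f : E → Fin C → ℝ) (w : E)
    (ψ : Fin C → E) (hψ : ∀ k, HasGradientAt (fun w' => f w' k) (ψ k) w)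
    (c : ℝ) (hc : 0 ≤ c)
    (horth : ∀ i j : Fin C, i ≠ j → inner ℝ (ψ i) (ψ j) = (0 : ℝ))
    (hnorm : ∀ k : Fin C, ‖ψ k‖ = c) :
    DifferentiableAt ℝ (fun w' => -∑ i, q i * Real.log (softmax T (f w') i)) w ∧
      ‖gradient (fun w' => -∑ i, q i * Real.log (softmax T (f w') i)) w‖
        = (c / T) * Real.sqrt (∑ k, (softmax T (f w) k - q k) ^ 2) := by
  have hgrad :=
    (hasFDerivAt_neg_sum_mul_log_softmax T hq1 (f w)).hasGradientAt_comp_of_hasGradientAt_apply hψ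
  refine ⟨hgrad.differentiableAt, ?_⟩
  rw [hgrad.gradient, norm_sum_smul_of_pairwise_inner_eq_zero_of_norm_eq horth hnorm hc]
  simp_rw [div_pow, ← Finset.sum_div, sqrt_div' _ (sq_nonneg T), sqrt_sq hT.le]
  ring

/-- Let `E` be a (complete) real inner product space, `T > 0`, and `q ∈ ℝ^C` a probability
vector. Let `f : E → ℝ^C` be differentiable at `w`, with per-logit gradients
`ψ k = ∇ (f · k) w` that are pairwise orthogonal of common norm `c ≥ 0`. Then the
cross-entropy loss `L(w') = -∑ i, q i * log p_i(f w')` is differentiable at `w` and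
`‖∇L(w)‖ = (c/T) * ‖p(f w) - q‖₂`. -/
theorem gradient_norm_crossEntropy_softmax
    {E : Type*} [NormedAddCommGroup E] [InnerProductSpace ℝ E] [CompleteSpace E]
    {C : ℕ} (hC : 1 ≤ C) (T : ℝ) (hT : 0 < T)
    (q : Fin C → ℝ) (hq0 : ∀ i, 0 ≤ q i) (hq1 : ∑ i, q i = 1)
    (f : E → Fin C → ℝ) (w : E) (hf : DifferentiableAt ℝ f w)
    (ψ : Fin C → E) (hψ : ∀ k, HasGradientAt (fun w' => f w' k) (ψ k) w)
    (c : ℝ) (hc : 0 ≤ c)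
    (horth : ∀ i j : Fin C, i ≠ j → inner ℝ (ψ i) (ψ j) = (0 : ℝ))
    (hnorm : ∀ k : Fin C, ‖ψ k‖ = c) :
    DifferentiableAt ℝ (fun w' => -∑ i, q i * Real.log (softmax T (f w') i)) w ∧
      ‖gradient (fun w' => -∑ i, q i * Real.log (softmax T (f w') i)) w‖
        = (c / T) * Real.sqrt (∑ k, (softmax T (f w) k - q k) ^ 2) :=
  gradient_norm_crossEntropy_softmax_general T hT q hq1 f w ψ hψ c hc horth hnorm
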